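/- arXiv:1304.0749 — 2 statements merged into one kernel-verified Lean document; each statement's English description precedes it below -/
import Mathlib

section
/- Let C_• be a paracyclic k-module over a field k of characteristic zero, with simplicial boundary b_n = Σ_{i=0}^{n} (−1)ⁱ d_{n,i}, norm operator N_n = Σ_{i=0}^{n} tⁱ_n, extra degeneracy s_n = (−1)^{n+1} t_{n+1} s_{n,n}, Connes–Tsygan boundary B_n = (id − t_{n+1}) s_n N_n, and T_n = t_n^{n+1}. Then for every n, b_{n+1} B_n + B_{n−1} b_n = id − T_n on C_n. -/
/-!
A *paracyclic `k`-module* is a simplicial `k`-module `C_• = ⊕_{n∈ℕ} C_n` together with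
operators `t_n : C_n → C_n` satisfying the paracyclic identities.  Here the face maps
`d_{n,i} : C_n → C_{n-1}` (for `n ≥ 1`, `0 ≤ i ≤ n`) are encoded as `d (n-1) i : C (n-1+1) →ₗ C (n-1)`,
and similarly for the degeneracies; the index `i` ranges over `ℕ`, with the simplicial and
paracyclic identities imposed only in the meaningful range (values outside the range are junk).
-/
structure Paracyclic (k : Type) [Field k] where
  /-- the underlying graded `k`-module -/
  C : ℕ → Type
  [acg : ∀ n, AddCommGroup (C n)]
  [mod : ∀ n, Module k (C n)]
  /-- face maps: `d n i : C (n+1) →ₗ C n` encodes `d_{n+1,i}` for `0 ≤ i ≤ n+1` -/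
  d : (n : ℕ) → ℕ → (C (n + 1) →ₗ[k] C n)
  /-- degeneracies: `s n i : C n →ₗ C (n+1)` encodes `s_{n,i}` for `0 ≤ i ≤ n` -/
  s : (n : ℕ) → ℕ → (C n →ₗ[k] C (n + 1))
  /-- cyclic operators -/
  t : (n : ℕ) → (C n →ₗ[k] C n)
  -- simplicial identities:
  d_d : ∀ n i j, i ≤ j → j ≤ n + 1 →
    (d n i).comp (d (n + 1) (j + 1)) = (d n j).comp (d (n + 1) i)
  s_s : ∀ n i j, i ≤ j → j ≤ n →
    (s (n + 1) i).comp (s n j) = (s (n + 1) (j + 1)).comp (s n i)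
  d_s_le : ∀ n i j, i ≤ j → j ≤ n →
    (d (n + 1) i).comp (s (n + 1) (j + 1)) = (s n j).comp (d n i)
  d_s_self : ∀ n i, i ≤ n → (d n i).comp (s n i) = LinearMap.id
  d_s_succ : ∀ n i, i ≤ n → (d n (i + 1)).comp (s n i) = LinearMap.id
  d_s_gt : ∀ n i j, j ≤ i → i ≤ n →
    (d (n + 1) (i + 2)).comp (s (n + 1) j) = (s n j).comp (d n (i + 1))
  -- paracyclic identities:
  d_t : ∀ n i, i ≤ n → (d n (i + 1)).comp (t (n + 1)) = -((t n).comp (d n i))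
  d_t_zero : ∀ n, (d n 0).comp (t (n + 1)) = ((-1 : k) ^ (n + 1)) • d n (n + 1)
  s_t : ∀ n i, i + 1 ≤ n → (s n (i + 1)).comp (t n) = -((t (n + 1)).comp (s n i))
  s_t_zero : ∀ n, (s n 0).comp (t n) =
    ((-1 : k) ^ n) • ((t (n + 1)).comp ((t (n + 1)).comp (s n n)))

attribute [instance] Paracyclic.acg Paracyclic.mod

namespace Paracyclic

variable {k : Type} [Field k] (P : Paracyclic k)

/-- the simplicial boundary `b_{n+1} : C_{n+1} → C_n` -/
noncomputable def b (n : ℕ) : P.C (n + 1) →ₗ[k] P.C n :=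
  ∑ i ∈ Finset.range (n + 2), ((-1 : k) ^ i) • P.d n i

/-- the acyclic boundary `b'_{n+1} : C_{n+1} → C_n` -/
noncomputable def b' (n : ℕ) : P.C (n + 1) →ₗ[k] P.C n :=
  ∑ i ∈ Finset.range (n + 1), ((-1 : k) ^ i) • P.d n i

/-- the norm operator `N_n = Σ_{i=0}^n t_n^i` -/
noncomputable def Nrm (n : ℕ) : P.C n →ₗ[k] P.C n :=
  ∑ i ∈ Finset.range (n + 1), (P.t n) ^ i

/-- the extra degeneracy `s_n = (-1)^{n+1} t_{n+1} s_{n,n}` -/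
noncomputable def sextra (n : ℕ) : P.C n →ₗ[k] P.C (n + 1) :=
  ((-1 : k) ^ (n + 1)) • ((P.t (n + 1)).comp (P.s n n))

/-- the Connes-Tsygan boundary `B_n = (id - t_{n+1}) s_n N_n` -/
noncomputable def Bct (n : ℕ) : P.C n →ₗ[k] P.C (n + 1) :=
  (LinearMap.id - P.t (n + 1)).comp ((P.sextra n).comp (P.Nrm n))

/-- the operator `T_n = t_n^{n+1}` -/
noncomputable def T (n : ℕ) : P.C n →ₗ[k] P.C n := (P.t n) ^ (n + 1)

end Paracyclic

/-!
Write `δᵢ = (-1)ⁱ dᵢ` for the signed faces. The paracyclic identities become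
`δᵢ₊₁ t = t δᵢ` and `δ₀ t = δₙ₊₁`, so `t` cyclically permutes the signed faces up to powers of
`t` in front; this gives `b (1 - t) = (1 - t) b'` and `b' N = N b`. Together with the contracting
homotopy `b' s + s b' = id` and `(1 - t) N = 1 - T`, one gets
`b B + B b = (1 - t) (b' s + s b') N = (1 - t) N = 1 - T`.
-/

namespace LinearMap

variable {R M N Q ι : Type*} [Semiring R] [AddCommMonoid M] [AddCommMonoid N] [AddCommMonoid Q]
  [Module R M] [Module R N] [Module R Q]

theorem sum_comp (s : Finset ι) (f : ι → N →ₗ[R] Q) (g : M →ₗ[R] N) :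
    (∑ i ∈ s, f i).comp g = ∑ i ∈ s, (f i).comp g := by
  ext; simp [LinearMap.sum_apply]

theorem comp_sum (s : Finset ι) (g : N →ₗ[R] Q) (f : ι → M →ₗ[R] N) :
    g.comp (∑ i ∈ s, f i) = ∑ i ∈ s, g.comp (f i) := by
  ext; simp [LinearMap.sum_apply]

end LinearMap

namespace Paracyclic

open Finset

variable {k : Type} [Field k] (P : Paracyclic k)

def signedFace (n i : ℕ) : P.C (n + 1) →ₗ[k] P.C n := (-1 : k) ^ i • P.d n i

theorem b_eq_sum_signedFace (n : ℕ) : P.b n = ∑ i ∈ range (n + 2), P.signedFace n i := rfl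

theorem b'_eq_sum_signedFace (n : ℕ) : P.b' n = ∑ i ∈ range (n + 1), P.signedFace n i := rfl

theorem b_eq_b'_add_signedFace (n : ℕ) : P.b n = P.b' n + P.signedFace n (n + 1) :=
  sum_range_succ _ _

theorem signedFace_succ_comp_t {n i : ℕ} (h : i ≤ n) :
    (P.signedFace n (i + 1)).comp (P.t (n + 1)) = (P.t n).comp (P.signedFace n i) := by
  rw [signedFace, signedFace, LinearMap.smul_comp, P.d_t n i h, LinearMap.comp_smul, pow_succ,
    mul_neg_one, neg_smul, smul_neg, neg_neg]

theorem signedFace_zero_comp_t (n : ℕ) :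
    (P.signedFace n 0).comp (P.t (n + 1)) = P.signedFace n (n + 1) := by
  simp only [signedFace, pow_zero, one_smul, P.d_t_zero]

theorem signedFace_add_comp_t_pow {n i j : ℕ} (h : i + j ≤ n + 1) :
    (P.signedFace n (i + j)).comp (P.t (n + 1) ^ j) = (P.t n ^ j).comp (P.signedFace n i) := by
  induction j with
  | zero => simp [Module.End.one_eq_id]
  | succ j ih =>
    rw [pow_succ', Module.End.mul_eq_comp, ← add_assoc, ← LinearMap.comp_assoc,
      P.signedFace_succ_comp_t (by omega), LinearMap.comp_assoc, ih (by omega),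
      ← LinearMap.comp_assoc, ← Module.End.mul_eq_comp, ← pow_succ']

theorem signedFace_comp_t_pow_succ_add {n i a : ℕ} (hi : i ≤ n) (ha : a ≤ n + 1) :
    (P.signedFace n i).comp (P.t (n + 1) ^ (i + 1 + a))
      = (P.t n ^ (i + a)).comp (P.signedFace n (n + 1 - a)) := by
  have h₁ := P.signedFace_add_comp_t_pow (n := n) (i := 0) (j := i) (by omega)
  have h₂ := P.signedFace_add_comp_t_pow (n := n) (i := n + 1 - a) (j := a) (by omega)
  rw [zero_add] at h₁
  rw [Nat.sub_add_cancel ha] at h₂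
  calc (P.signedFace n i).comp (P.t (n + 1) ^ (i + 1 + a))
      = (((P.signedFace n i).comp (P.t (n + 1) ^ i)).comp (P.t (n + 1))).comp
          (P.t (n + 1) ^ a) := by
        simp only [pow_add, pow_one, Module.End.mul_eq_comp, LinearMap.comp_assoc]
    _ = (P.t n ^ i).comp ((P.signedFace n (n + 1)).comp (P.t (n + 1) ^ a)) := by
        rw [h₁, ← P.signedFace_zero_comp_t]
        simp only [LinearMap.comp_assoc]
    _ = (P.t n ^ (i + a)).comp (P.signedFace n (n + 1 - a)) := by
        rw [h₂, ← LinearMap.comp_assoc, ← Module.End.mul_eq_comp, ← pow_add]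

theorem b_comp_t (n : ℕ) :
    (P.b n).comp (P.t (n + 1)) = P.signedFace n (n + 1) + (P.t n).comp (P.b' n) := by
  rw [b_eq_sum_signedFace, b'_eq_sum_signedFace, LinearMap.sum_comp, sum_range_succ',
    LinearMap.comp_sum, signedFace_zero_comp_t, add_comm (P.signedFace n (n + 1))]
  congr 1
  exact sum_congr rfl fun i hi => P.signedFace_succ_comp_t (Nat.lt_succ_iff.mp (mem_range.mp hi))

theorem b_comp_one_sub_t (n : ℕ) :
    (P.b n).comp (LinearMap.id - P.t (n + 1)) = (LinearMap.id - P.t n).comp (P.b' n) := by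
  rw [LinearMap.comp_sub, LinearMap.sub_comp, LinearMap.comp_id, LinearMap.id_comp, b_comp_t,
    b_eq_b'_add_signedFace]
  abel

theorem b'_comp_Nrm (n : ℕ) : (P.b' n).comp (P.Nrm (n + 1)) = (P.Nrm n).comp (P.b n) := by
  calc (P.b' n).comp (P.Nrm (n + 1))
      = ∑ p ∈ range (n + 1) ×ˢ range (n + 2),
          (P.signedFace n p.1).comp (P.t (n + 1) ^ p.2) := by
        rw [b'_eq_sum_signedFace, LinearMap.sum_comp, sum_product]
        simp only [Nrm, LinearMap.comp_sum]
    _ = ∑ p ∈ range (n + 1) ×ˢ range (n + 2), (P.t n ^ p.1).comp (P.signedFace n p.2) := by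
        -- `(i, j) ↦ (a, c)` with `δᵢ tʲ = tᵃ δ_c` is a bijection of `[0, n] × [0, n + 1]`
        refine sum_nbij'
          (fun p => if p.2 ≤ p.1 then (p.2, p.1 - p.2) else (p.2 - 1, n + 2 + p.1 - p.2))
          (fun q => if q.1 + q.2 ≤ n then (q.1 + q.2, q.1) else (q.1 + q.2 - (n + 1), q.1 + 1))
          ?_ ?_ ?_ ?_ ?_ <;> rintro ⟨i, j⟩ hij <;> simp only [mem_product, mem_range] at hij
        · split_ifs <;> simp only [mem_product, mem_range] <;> omega
        · split_ifs <;> simp only [mem_product, mem_range] <;> omega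
        · split_ifs <;> ext <;> simp only at * <;> omega
        · split_ifs <;> ext <;> simp only at * <;> omega
        · dsimp only
          split_ifs with hji
          · obtain ⟨m, rfl⟩ : ∃ m, i = m + j := ⟨i - j, by omega⟩
            rw [Nat.add_sub_cancel, P.signedFace_add_comp_t_pow (by omega)]
          · obtain ⟨a, rfl⟩ : ∃ a, j = i + 1 + a := ⟨j - i - 1, by omega⟩
            rw [P.signedFace_comp_t_pow_succ_add (by omega) (by omega),
              show i + 1 + a - 1 = i + a by omega, show n + 2 + i - (i + 1 + a) = n + 1 - a by omega]
    _ = (P.Nrm n).comp (P.b n) := by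
        rw [Nrm, LinearMap.sum_comp, sum_product]
        simp only [b_eq_sum_signedFace, LinearMap.comp_sum]

theorem signedFace_comp_s_last {n j : ℕ} (h : j ≤ n) :
    (P.signedFace (n + 1) j).comp (P.s (n + 1) (n + 1)) = (P.s n n).comp (P.signedFace n j) := by
  rw [signedFace, signedFace, LinearMap.smul_comp, LinearMap.comp_smul, P.d_s_le n j n h le_rfl]

theorem signedFace_zero_comp_sextra (n : ℕ) :
    (P.signedFace n 0).comp (P.sextra n) = LinearMap.id := by
  rw [sextra, LinearMap.comp_smul, ← LinearMap.comp_assoc, signedFace_zero_comp_t, signedFace,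
    LinearMap.smul_comp, P.d_s_succ n n le_rfl, smul_smul, ← pow_add,
    (Even.add_self (n + 1)).neg_one_pow, one_smul]

theorem signedFace_succ_comp_sextra {n j : ℕ} (h : j ≤ n) :
    (P.signedFace (n + 1) (j + 1)).comp (P.sextra (n + 1))
      = -(P.sextra n).comp (P.signedFace n j) := by
  rw [sextra, sextra, LinearMap.comp_smul, ← LinearMap.comp_assoc,
    P.signedFace_succ_comp_t (by omega), LinearMap.comp_assoc, P.signedFace_comp_s_last h,
    LinearMap.smul_comp, LinearMap.comp_assoc, pow_succ _ (n + 1), mul_neg_one, neg_smul]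

theorem b'_zero_comp_sextra : (P.b' 0).comp (P.sextra 0) = LinearMap.id := by
  rw [b'_eq_sum_signedFace, sum_range_one, signedFace_zero_comp_sextra]

theorem b'_comp_sextra_add_sextra_comp_b' (n : ℕ) :
    (P.b' (n + 1)).comp (P.sextra (n + 1)) + (P.sextra n).comp (P.b' n) = LinearMap.id := by
  rw [b'_eq_sum_signedFace, b'_eq_sum_signedFace, LinearMap.sum_comp, sum_range_succ',
    signedFace_zero_comp_sextra, LinearMap.comp_sum,
    sum_congr rfl fun j hj => P.signedFace_succ_comp_sextra (Nat.lt_succ_iff.mp (mem_range.mp hj)),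
    sum_neg_distrib]
  abel

theorem one_sub_t_comp_Nrm (n : ℕ) :
    (LinearMap.id - P.t n).comp (P.Nrm n) = LinearMap.id - P.T n := by
  rw [Nrm, T, ← Module.End.one_eq_id, ← Module.End.mul_eq_comp, mul_neg_geom_sum]

theorem b_comp_Bct (n : ℕ) :
    (P.b n).comp (P.Bct n)
      = (LinearMap.id - P.t n).comp (((P.b' n).comp (P.sextra n)).comp (P.Nrm n)) := by
  rw [Bct, ← LinearMap.comp_assoc, b_comp_one_sub_t]
  simp only [LinearMap.comp_assoc]

theorem Bct_comp_b (n : ℕ) :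
    (P.Bct n).comp (P.b n)
      = (LinearMap.id - P.t (n + 1)).comp (((P.sextra n).comp (P.b' n)).comp (P.Nrm (n + 1))) := by
  rw [Bct, LinearMap.comp_assoc, LinearMap.comp_assoc, ← b'_comp_Nrm, LinearMap.comp_assoc]

end Paracyclic

theorem connes_tsygan_homotopy_formula_general (k : Type) [Field k] (P : Paracyclic k) :
    ((P.b 0).comp (P.Bct 0) = LinearMap.id - P.T 0) ∧
      ∀ n : ℕ, (P.b (n + 1)).comp (P.Bct (n + 1)) + (P.Bct n).comp (P.b n) =
        LinearMap.id - P.T (n + 1) := by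
  refine ⟨?_, fun n => ?_⟩
  · rw [P.b_comp_Bct, P.b'_zero_comp_sextra, LinearMap.id_comp, P.one_sub_t_comp_Nrm]
  · rw [P.b_comp_Bct, P.Bct_comp_b, ← LinearMap.comp_add, ← LinearMap.add_comp,
      P.b'_comp_sextra_add_sextra_comp_b', LinearMap.id_comp, P.one_sub_t_comp_Nrm]

/-- For every paracyclic `k`-module (`k` a field of characteristic zero)
one has `b_{n+1} B_n + B_{n-1} b_n = id - T_n` on `C_n` for every `n`
(in degree `0` the second summand is absent, as `b_0 = 0`). -/
theorem connes_tsygan_homotopy_formula (k : Type) [Field k] [CharZero k] (P : Paracyclic k) :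
    ((P.b 0).comp (P.Bct 0) = LinearMap.id - P.T 0) ∧
      ∀ n : ℕ, (P.b (n + 1)).comp (P.Bct (n + 1)) + (P.Bct n).comp (P.b n) =
        LinearMap.id - P.T (n + 1) :=
  connes_tsygan_homotopy_formula_general k P
end

section
/- Let C_• be a paracyclic k-module over a field k of characteristic zero, with b_n, N_n, extra degeneracy s_n, Connes–Tsygan boundary B_n, and T_n = t_n^{n+1} as usual. Then for every n, B_{n+1} B_n = (id − T_{n+2})(id − t_{n+2}) s_{n+1} s_n N_n on C_n. -/
/-! The norm operator telescopes: `N_{n+1}(id - t_{n+1}) = id - T_{n+1}`, so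
`B_{n+1}B_n = (id - t_{n+2}) s_{n+1} (id - T_{n+1}) s_n N_n`. Moving powers of `t` across the
last degeneracy with the paracyclic relations gives `s_{n,n} T_n = t_{n+1}^{n+2} s_{n,n}`, i.e. the
extra degeneracy intertwines `T_n` and `T_{n+1}`; and `T` commutes with `t`. -/

namespace Paracyclic

open LinearMap

variable {k : Type} [Field k] (P : Paracyclic k)

theorem Nrm_comp_id_sub_t (n : ℕ) :
    (P.Nrm n).comp (LinearMap.id - P.t n) = LinearMap.id - P.T n :=
  geom_sum_mul_neg (P.t n) (n + 1)

theorem s_comp_t_pow (n j : ℕ) :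
    ∀ i, i + j ≤ n → (P.s n (i + j)).comp (P.t n ^ j) =
      (-1 : k) ^ j • (P.t (n + 1) ^ j).comp (P.s n i) := by
  induction j with
  | zero => intro i _; simp [Module.End.one_eq_id]
  | succ j ih =>
    intro i hij
    calc (P.s n (i + (j + 1))).comp (P.t n ^ (j + 1))
        = ((P.s n (i + 1 + j)).comp (P.t n ^ j)).comp (P.t n) := by
          rw [pow_succ, Module.End.mul_eq_comp, comp_assoc, Nat.add_right_comm, add_assoc]
      _ = (-1 : k) ^ j • (P.t (n + 1) ^ j).comp ((P.s n (i + 1)).comp (P.t n)) := by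
          rw [ih (i + 1) (by omega), smul_comp, comp_assoc]
      _ = (-1 : k) ^ (j + 1) • (P.t (n + 1) ^ (j + 1)).comp (P.s n i) := by
          rw [P.s_t n i (by omega), comp_neg, ← comp_assoc, ← Module.End.mul_eq_comp,
            ← pow_succ, pow_succ (-1 : k), mul_neg_one, neg_smul, smul_neg]

theorem s_comp_T (n : ℕ) :
    (P.s n n).comp (P.T n) = (P.t (n + 1) ^ (n + 2)).comp (P.s n n) := by
  have h := P.s_comp_t_pow n n 0 (by omega)
  rw [zero_add] at h
  calc (P.s n n).comp (P.T n)
      = (-1 : k) ^ n • (P.t (n + 1) ^ n).comp ((P.s n 0).comp (P.t n)) := by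
        rw [T, pow_succ, Module.End.mul_eq_comp, ← comp_assoc, h, smul_comp, comp_assoc]
    _ = (P.t (n + 1) ^ (n + 2)).comp (P.s n n) := by
        rw [P.s_t_zero, comp_smul, smul_smul, ← mul_pow, neg_one_mul, neg_neg, one_pow, one_smul,
          pow_succ, pow_succ, Module.End.mul_eq_comp, Module.End.mul_eq_comp, comp_assoc,
          comp_assoc]

theorem sextra_comp_T (n : ℕ) : (P.sextra n).comp (P.T n) = (P.T (n + 1)).comp (P.sextra n) := by
  rw [sextra, smul_comp, comp_smul, comp_assoc, s_comp_T, T, ← comp_assoc, ← comp_assoc,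
    ← Module.End.mul_eq_comp, ← Module.End.mul_eq_comp, ← pow_succ', ← pow_succ]

theorem sextra_comp_id_sub_T (n : ℕ) :
    (P.sextra n).comp (LinearMap.id - P.T n) = (LinearMap.id - P.T (n + 1)).comp (P.sextra n) := by
  rw [comp_sub, sub_comp, sextra_comp_T, comp_id, id_comp]

theorem commute_id_sub_t_id_sub_T (n : ℕ) :
    Commute (LinearMap.id - P.t n) (LinearMap.id - P.T n) :=
  (Commute.one_right _).sub_right
    ((Commute.one_left _).sub_left (Commute.self_pow (P.t n) (n + 1)))

end Paracyclic

theorem connes_tsygan_B_squared_general (k : Type) [Field k] (P : Paracyclic k) :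
    ∀ n : ℕ, (P.Bct (n + 1)).comp (P.Bct n) =
      (LinearMap.id - P.T (n + 2)).comp ((LinearMap.id - P.t (n + 2)).comp
        ((P.sextra (n + 1)).comp ((P.sextra n).comp (P.Nrm n)))) := by
  intro n
  calc (P.Bct (n + 1)).comp (P.Bct n)
      = (LinearMap.id - P.t (n + 2)).comp
          (((P.sextra (n + 1)).comp ((P.Nrm (n + 1)).comp (LinearMap.id - P.t (n + 1)))).comp
            ((P.sextra n).comp (P.Nrm n))) := by
        simp only [Paracyclic.Bct, LinearMap.comp_assoc]
    _ = (LinearMap.id - P.t (n + 2)).comp (((LinearMap.id - P.T (n + 2)).comp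
          (P.sextra (n + 1))).comp ((P.sextra n).comp (P.Nrm n))) := by
        rw [P.Nrm_comp_id_sub_t, P.sextra_comp_id_sub_T]
    _ = ((LinearMap.id - P.t (n + 2)).comp (LinearMap.id - P.T (n + 2))).comp
          ((P.sextra (n + 1)).comp ((P.sextra n).comp (P.Nrm n))) := by
        simp only [LinearMap.comp_assoc]
    _ = _ := by
        rw [← Module.End.mul_eq_comp, (P.commute_id_sub_t_id_sub_T (n + 2)).eq,
          Module.End.mul_eq_comp, LinearMap.comp_assoc]

/-- For every paracyclic `k`-module (`k` a field of characteristic zero)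
one has `B_{n+1} B_n = (id - T_{n+2})(id - t_{n+2}) s_{n+1} s_n N_n` on `C_n` for every `n`,
where `s` denotes the extra degeneracies. -/
theorem connes_tsygan_B_squared (k : Type) [Field k] [CharZero k] (P : Paracyclic k) :
    ∀ n : ℕ, (P.Bct (n + 1)).comp (P.Bct n) =
      (LinearMap.id - P.T (n + 2)).comp ((LinearMap.id - P.t (n + 2)).comp
        ((P.sextra (n + 1)).comp ((P.sextra n).comp (P.Nrm n)))) :=
  connes_tsygan_B_squared_general k P
end
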